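/- In the rescaled setting, let q < p with q, p ∈ I and α_{q,p} = (p−q)(1 − χ(p−q+1)/(N+1)). (1) If p−q+1 ≤ k−1 (so α_{q,p} > 0) and at time τ one has √(P²_{q,p} 𝓗_{q,p,2}) ≤ α_{q,p}/(2(2+2χ/√N)), then (1/2) d/dτ P²_{q,p} ≥ α_{q,p}/2 + α P²_{q,p} > 0. (2) If p−q+1 ≥ k (so α_{q,p} < 0) and at time τ one has √(P²_{q,p} 𝓗_{q,p,2}) ≤ −α_{q,p}/(2(2+2χ/√N)), then (1/2) d/dτ P²_{q,p} ≤ α_{q,p}/2 + α P²_{q,p}. -/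

import Mathlib

open Filter

noncomputable section

/-- `h_N = 1/(N+1)`. -/
def hN (N : ℕ) : ℝ := 1 / (N + 1)

/-- Right-hand side of the discrete Keller–Segel particle ODE, with the convention that
the boundary terms `1/(X_1 - X_0)` and `1/(X_{N+1} - X_N)` are set to zero. -/
def ksRHS (N : ℕ) (χ : ℝ) (x : ℕ → ℝ) (i : ℕ) : ℝ :=
  (if i < N then -(1 / (x (i + 1) - x i)) else 0)
    + (if 1 < i then 1 / (x i - x (i - 1)) else 0)
    + 2 * χ * hN N * ∑ j ∈ (Finset.Icc 1 N).erase i, 1 / (x j - x i)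

/-- A solution of the discrete Keller–Segel particle system on `[0,T)`. -/
structure IsKSSol (N : ℕ) (χ T : ℝ) (X : ℕ → ℝ → ℝ) : Prop where
  ordered : ∀ t ∈ Set.Ico (0 : ℝ) T, ∀ i, 1 ≤ i → i < N → X i t < X (i + 1) t
  ode : ∀ i ∈ Finset.Icc 1 N, ∀ t ∈ Set.Ico (0 : ℝ) T,
    HasDerivAt (X i) (ksRHS N χ (fun j => X j t) i) t

/-- A solution on its maximal interval of existence `[0,T)`: it cannot be extended to a
solution on any larger interval `[0,T')`. -/
def IsMaxKSSol (N : ℕ) (χ T : ℝ) (X : ℕ → ℝ → ℝ) : Prop :=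
  IsKSSol N χ T X ∧
    ∀ T' > T, ∀ X' : ℕ → ℝ → ℝ,
      (∀ i ∈ Finset.Icc 1 N, ∀ t ∈ Set.Ico (0 : ℝ) T, X' i t = X i t) →
        ¬ IsKSSol N χ T' X'

/-- `liminf_{t → T⁻} (X_{i+1}(t) - X_i(t)) = 0`. -/
def gapLiminfZero (X : ℕ → ℝ → ℝ) (T : ℝ) (i : ℕ) : Prop :=
  Filter.liminf (fun t => X (i + 1) t - X i t) (nhdsWithin T (Set.Iio T)) = 0

/-- A nonempty set of consecutive indices in `{1,…,N}` all of whose consecutive gaps have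
liminf zero at time `T`. -/
def IsWeakCand (N : ℕ) (X : ℕ → ℝ → ℝ) (T : ℝ) (I : Finset ℕ) : Prop :=
  I.Nonempty ∧ (∃ a b, 1 ≤ a ∧ b ≤ N ∧ I = Finset.Icc a b) ∧
    ∀ i, i ∈ I → i + 1 ∈ I → gapLiminfZero X T i

/-- A weak blow-up set: maximal for inclusion among weak candidates. -/
def IsWeakBlowup (N : ℕ) (X : ℕ → ℝ → ℝ) (T : ℝ) (I : Finset ℕ) : Prop :=
  IsWeakCand N X T I ∧ ∀ J, IsWeakCand N X T J → I ⊆ J → J = I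

/-- A strong blow-up set: all consecutive gaps tend to zero, and the particles of `I` stay
uniformly away from the particles outside `I`. -/
def IsStrongBlowup (N : ℕ) (X : ℕ → ℝ → ℝ) (T : ℝ) (I : Finset ℕ) : Prop :=
  IsWeakBlowup N X T I ∧
    (∀ i, i ∈ I → i + 1 ∈ I →
      Filter.Tendsto (fun t => X (i + 1) t - X i t) (nhdsWithin T (Set.Iio T)) (nhds 0)) ∧
    ∃ c > 0, ∀ i ∈ I, ∀ j ∈ Finset.Icc 1 N, j ∉ I → ∀ t ∈ Set.Ico (0 : ℝ) T,
      1 / c ≤ |X i t - X j t|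

/-- Mean of the configuration `x` over the index set `I`. -/
def meanOn (I : Finset ℕ) (x : ℕ → ℝ) : ℝ := (∑ i ∈ I, x i) / (I.card : ℝ)

/-- Variance `Π²_I` of the configuration `x` over the index set `I`. -/
def var2 (I : Finset ℕ) (x : ℕ → ℝ) : ℝ := ∑ i ∈ I, (x i - meanOn I x) ^ 2

/-- Exterior interaction potential `H_{IO,m} = ∑_{j∈O} ∑_{i∈I} 1/(x_j - x_i)^m`,
where `O = {1,…,N} \ I`. -/
def extPot (N : ℕ) (I : Finset ℕ) (m : ℕ) (x : ℕ → ℝ) : ℝ :=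
  ∑ j ∈ (Finset.Icc 1 N) \ I, ∑ i ∈ I, 1 / (x j - x i) ^ m

/-! With `d_i = Y_i - Ȳ_{q,p}`, the rescaled equation gives
`½ d/dτ P²_{q,p} = ∑ d_i F_i(Y) + α P²_{q,p}`, where `F` is the Keller–Segel drift.
In `∑ d_i F_i` the nearest-neighbour terms telescope to `p - q` (each bond inside `[q,p]`
contributes `(d_{i+1} - d_i) / (Y_{i+1} - Y_i) = 1`) plus the two bonds leaving `[q,p]`, and the
interactions inside `[q,p]` pair up, each pair `{i, j}` contributing
`d_i / (Y_j - Y_i) + d_j / (Y_i - Y_j) = -1`; together these give exactly `α_{q,p}`.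
The two boundary bonds and, by Cauchy–Schwarz, the interactions with the particles outside
`[q,p]` are at most `(2 + 2χ/√N) √(P²_{q,p} 𝓗_{q,p,2})`, which the hypothesis makes at most
`|α_{q,p}| / 2`. -/

open Finset

section Variance

variable (s : Finset ℕ)

lemma sum_sub_meanOn (x : ℕ → ℝ) : ∑ i ∈ s, (x i - meanOn s x) = 0 := by
  rcases s.eq_empty_or_nonempty with rfl | hs
  · simp
  · have hcard : (#s : ℝ) ≠ 0 := by exact_mod_cast hs.card_pos.ne'
    rw [sum_sub_distrib, sum_const, nsmul_eq_mul, meanOn, mul_div_cancel₀ _ hcard, sub_self]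

lemma sum_sub_meanOn_mul_self (x : ℕ → ℝ) :
    ∑ i ∈ s, (x i - meanOn s x) * x i = var2 s x := by
  have h := sum_sub_meanOn s x
  rw [var2, ← sub_eq_zero, ← sum_sub_distrib]
  calc ∑ i ∈ s, ((x i - meanOn s x) * x i - (x i - meanOn s x) ^ 2)
      = meanOn s x * ∑ i ∈ s, (x i - meanOn s x) := by rw [mul_sum]; congr! 1 with i; ring
    _ = 0 := by rw [h, mul_zero]

lemma var2_nonneg (x : ℕ → ℝ) : 0 ≤ var2 s x :=
  sum_nonneg fun _ _ => sq_nonneg _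

lemma abs_sub_meanOn_le_sqrt_var2 {x : ℕ → ℝ} {i : ℕ} (hi : i ∈ s) :
    |x i - meanOn s x| ≤ √(var2 s x) :=
  Real.abs_le_sqrt (single_le_sum (f := fun i => (x i - meanOn s x) ^ 2)
    (fun _ _ => sq_nonneg _) hi)

lemma hasDerivAt_var2 {y : ℕ → ℝ → ℝ} {v : ℕ → ℝ} {τ : ℝ}
    (hy : ∀ i ∈ s, HasDerivAt (y i) (v i) τ) :
    HasDerivAt (fun σ => var2 s (fun i => y i σ))
      (2 * ∑ i ∈ s, (y i τ - meanOn s (fun j => y j τ)) * v i) τ := by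
  have hmean : HasDerivAt (fun σ => meanOn s (fun i => y i σ)) (meanOn s v) τ :=
    (HasDerivAt.fun_sum hy).div_const _
  have hsq : ∀ i ∈ s, HasDerivAt (fun σ => (y i σ - meanOn s (fun j => y j σ)) ^ 2)
      (2 * (y i τ - meanOn s (fun j => y j τ)) * (v i - meanOn s v)) τ := fun i hi => by
    simpa using ((hy i hi).fun_sub hmean).fun_pow 2
  refine (HasDerivAt.fun_sum hsq).congr_deriv ?_
  calc ∑ i ∈ s, 2 * (y i τ - meanOn s (fun j => y j τ)) * (v i - meanOn s v)
      = 2 * ∑ i ∈ s, (y i τ - meanOn s (fun j => y j τ)) * v i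
          - 2 * meanOn s v * ∑ i ∈ s, (y i τ - meanOn s (fun j => y j τ)) := by
        rw [mul_sum, mul_sum, ← sum_sub_distrib]; congr! 1 with i; ring
    _ = _ := by rw [sum_sub_meanOn, mul_zero, sub_zero]

lemma half_deriv_var2_eq {y : ℕ → ℝ → ℝ} {F : ℕ → ℝ} {α τ : ℝ}
    (hy : ∀ i ∈ s, HasDerivAt (y i) (F i + α * y i τ) τ) :
    1 / 2 * deriv (fun σ => var2 s (fun i => y i σ)) τ
      = ∑ i ∈ s, (y i τ - meanOn s (fun j => y j τ)) * F i + α * var2 s (fun i => y i τ) := by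
  rw [(hasDerivAt_var2 s hy).deriv, ← sum_sub_meanOn_mul_self s]
  simp only [mul_add, sum_add_distrib, mul_left_comm _ α, ← mul_sum]
  ring

end Variance

lemma sum_sum_erase_sub_div_sub {ι : Type*} [DecidableEq ι] {s : Finset ι} {y : ι → ℝ}
    (hy : Set.InjOn y s) (c : ℝ) :
    ∑ i ∈ s, ∑ j ∈ s.erase i, (y i - c) / (y j - y i) = -((#s : ℝ) * (#s - 1)) / 2 := by
  set F := ∑ i ∈ s, ∑ j ∈ s.erase i, (y i - c) / (y j - y i)
  have hswap : F = ∑ i ∈ s, ∑ j ∈ s.erase i, (y j - c) / (y i - y j) :=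
    sum_comm' fun i j => by simp only [mem_erase]; tauto
  have hpair : ∀ i ∈ s, ∀ j ∈ s.erase i,
      (y i - c) / (y j - y i) + (y j - c) / (y i - y j) = -1 := by
    intro i hi j hj
    obtain ⟨hji, hj⟩ := mem_erase.mp hj
    have hne : y j - y i ≠ 0 := sub_ne_zero.mpr fun h => hji (hy hj hi h)
    rw [← neg_sub (y j) (y i), div_neg, ← sub_eq_add_neg, ← sub_div, div_eq_iff hne]
    ring
  have h2F : F + F = -((#s : ℝ) * (#s - 1)) := by
    nth_rewrite 2 [hswap]
    rw [← sum_add_distrib]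
    simp_rw [← sum_add_distrib]
    rw [sum_congr rfl fun i hi => sum_congr rfl (hpair i hi),
      sum_congr rfl fun i hi => sum_erase_eq_sub hi]
    simp only [sum_const, nsmul_eq_mul]
    ring
  linarith

lemma abs_sum_sum_mul_le_sqrt {ι κ : Type*} (s : Finset ι) (t : Finset κ) (a : ι → ℝ)
    (b : ι → κ → ℝ) :
    |∑ i ∈ s, ∑ j ∈ t, a i * b i j|
      ≤ √(#t * ((∑ i ∈ s, a i ^ 2) * ∑ i ∈ s, ∑ j ∈ t, b i j ^ 2)) := by
  apply Real.abs_le_sqrt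
  have hsq : ∑ i ∈ s, ∑ _j ∈ t, a i ^ 2 = #t * ∑ i ∈ s, a i ^ 2 := by
    simp only [sum_const, nsmul_eq_mul, mul_sum]
  rw [← mul_assoc, ← hsq, ← sum_product' (f := fun i j => a i * b i j),
    ← sum_product' (f := fun i _ => a i ^ 2), ← sum_product' (f := fun i j => b i j ^ 2)]
  exact sum_mul_sq_le_sq_mul_sq _ _ _

lemma sum_Icc_sub_mul_sub_eq {y w : ℕ → ℝ} (c : ℝ) {q p : ℕ} (hqp : q ≤ p)
    (hw : ∀ i, q ≤ i → i < p → (y (i + 1) - y i) * w i = 1) :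
    ∑ i ∈ Icc q p, (y i - c) * (w (i - 1) - w i)
      = (p - q : ℝ) + (y q - c) * w (q - 1) - (y p - c) * w p := by
  induction p, hqp using Nat.le_induction with
  | base => simp only [Icc_self, sum_singleton]; ring
  | succ p hqp ih =>
    rw [sum_Icc_succ_top (by omega), ih fun i h1 h2 => hw i h1 (by omega), Nat.add_sub_cancel,
      Nat.cast_succ]
    linear_combination hw p hqp (by omega)

lemma ksRHS_div_sub (N : ℕ) (χ R b : ℝ) (x : ℕ → ℝ) (i : ℕ) :
    ksRHS N χ (fun j => (x j - b) / R) i = R * ksRHS N χ x i := by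
  have key : ∀ a c : ℕ, 1 / ((x a - b) / R - (x c - b) / R) = R * (1 / (x a - x c)) := by
    intro a c
    rw [div_sub_div_same, sub_sub_sub_cancel_right, one_div_div, div_eq_mul_one_div]
  simp only [ksRHS, key, ← mul_sum]
  split_ifs <;> ring

lemma IsKSSol.strictMonoOn {N : ℕ} {χ T : ℝ} {X : ℕ → ℝ → ℝ} (hX : IsKSSol N χ T X) {t : ℝ}
    (ht : t ∈ Set.Ico 0 T) : StrictMonoOn (fun i => X i t) (Set.Icc 1 N) :=
  strictMonoOn_of_lt_add_one Set.ordConnected_Icc fun i _ hi hi' =>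
    hX.ordered t ht i hi.1 hi'.2

/-- `Y_i(τ) = (X_i(t) - X̄) / R(t)` at `t = T (1 - e^{-2ατ})`, where `R(t) = √(2αT) e^{-ατ}`. -/
def ksRescale (X : ℕ → ℝ → ℝ) (T α Xbar : ℝ) (i : ℕ) (τ : ℝ) : ℝ :=
  (X i (T * (1 - Real.exp (-2 * α * τ))) - Xbar) / (√(2 * α * T) * Real.exp (-α * τ))

section Rescaling

variable {T α τ : ℝ}

lemma ksTime_mem_Ico (hα : 0 ≤ α) (hT : 0 < T) (hτ : 0 ≤ τ) :
    T * (1 - Real.exp (-2 * α * τ)) ∈ Set.Ico 0 T := by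
  have h1 : Real.exp (-2 * α * τ) ≤ 1 := Real.exp_le_one_iff.mpr (by nlinarith)
  have h2 : 0 < Real.exp (-2 * α * τ) := Real.exp_pos _
  constructor <;> nlinarith

variable {N : ℕ} {χ : ℝ} {X : ℕ → ℝ → ℝ}

lemma IsKSSol.strictMonoOn_ksRescale (hX : IsKSSol N χ T X) (hα : 0 < α) (hT : 0 < T)
    (hτ : 0 ≤ τ) (Xbar : ℝ) :
    StrictMonoOn (fun i => ksRescale X T α Xbar i τ) (Set.Icc 1 N) := fun _ hi _ hj hij =>
  div_lt_div_of_pos_right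
    (sub_lt_sub_right (hX.strictMonoOn (ksTime_mem_Ico hα.le hT hτ) hi hj hij) _) (by positivity)

lemma IsKSSol.hasDerivAt_ksRescale (hX : IsKSSol N χ T X) (hα : 0 < α) (hT : 0 < T)
    (hτ : 0 ≤ τ) (Xbar : ℝ) {i : ℕ} (hi : i ∈ Icc 1 N) :
    HasDerivAt (ksRescale X T α Xbar i)
      (ksRHS N χ (fun j => ksRescale X T α Xbar j τ) i + α * ksRescale X T α Xbar i τ) τ := by
  unfold ksRescale
  set c := √(2 * α * T)
  have hc2 : c ^ 2 = 2 * α * T := Real.sq_sqrt (by positivity)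
  have hexp : Real.exp (-2 * α * τ) = Real.exp (-α * τ) ^ 2 := by
    rw [← Real.exp_nat_mul]; ring_nf
  have htime : HasDerivAt (fun σ => T * (1 - Real.exp (-2 * α * σ)))
      (c ^ 2 * Real.exp (-α * τ) ^ 2) τ := by
    have := ((((hasDerivAt_id τ).const_mul (-2 * α)).exp).const_sub 1).const_mul T
    refine this.congr_deriv ?_
    rw [hc2, ← hexp, id]; ring
  have hscale : HasDerivAt (fun σ => c * Real.exp (-α * σ)) (-α * (c * Real.exp (-α * τ))) τ := by
    have := (((hasDerivAt_id τ).const_mul (-α)).exp).const_mul c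
    refine this.congr_deriv ?_
    rw [id]; ring
  have hR : c * Real.exp (-α * τ) ≠ 0 := by positivity
  refine ((((hX.ode i hi _ (ksTime_mem_Ico hα.le hT hτ)).comp τ htime).sub_const Xbar).div hscale
    hR).congr_deriv ?_
  rw [ksRHS_div_sub, Function.comp_apply]
  field_simp
  ring

end Rescaling

def ksGapInv (N : ℕ) (y : ℕ → ℝ) (i : ℕ) : ℝ :=
  if 1 ≤ i ∧ i < N then 1 / (y (i + 1) - y i) else 0

lemma ksRHS_eq_ksGapInv {N : ℕ} {s : Finset ℕ} (hs : s ⊆ Icc 1 N) (χ : ℝ) (y : ℕ → ℝ) {i : ℕ}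
    (hi : i ∈ s) :
    ksRHS N χ y i = ksGapInv N y (i - 1) - ksGapInv N y i
      + 2 * χ * hN N * (∑ j ∈ s.erase i, 1 / (y j - y i) + ∑ j ∈ Icc 1 N \ s, 1 / (y j - y i)) := by
  obtain ⟨h1i, hiN⟩ := mem_Icc.mp (hs hi)
  have hsplit : ∑ j ∈ (Icc 1 N).erase i, 1 / (y j - y i)
      = ∑ j ∈ s.erase i, 1 / (y j - y i) + ∑ j ∈ Icc 1 N \ s, 1 / (y j - y i) := by
    rw [sum_erase_eq_sub (hs hi), sum_erase_eq_sub hi, ← sum_sdiff hs]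
    ring
  rw [ksRHS, hsplit, ksGapInv, ksGapInv, Nat.sub_add_cancel h1i]
  congr 1
  split_ifs <;> first | omega | ring

lemma sum_sub_meanOn_mul_ksRHS {N q p : ℕ} (χ : ℝ) (hq : 1 ≤ q) (hqp : q ≤ p) (hpN : p ≤ N)
    {y : ℕ → ℝ} (hy : Set.InjOn y (Set.Icc q p)) :
    ∑ i ∈ Icc q p, (y i - meanOn (Icc q p) y) * ksRHS N χ y i
      = (p - q) * (1 - χ * (p - q + 1) / (N + 1))
        + (y q - meanOn (Icc q p) y) * ksGapInv N y (q - 1)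
        - (y p - meanOn (Icc q p) y) * ksGapInv N y p
        + 2 * χ * hN N * ∑ i ∈ Icc q p, ∑ j ∈ Icc 1 N \ Icc q p,
            (y i - meanOn (Icc q p) y) * (1 / (y j - y i)) := by
  set s := Icc q p
  set m := meanOn s y
  have hs : s ⊆ Icc 1 N := Icc_subset_Icc hq hpN
  have hcard : (#s : ℝ) = p - q + 1 := by
    rw [Nat.card_Icc, Nat.cast_sub (by omega)]; push_cast; ring
  have hgap : ∀ i, q ≤ i → i < p → (y (i + 1) - y i) * ksGapInv N y i = 1 := by
    intro i hqi hip
    have hne : y (i + 1) - y i ≠ 0 :=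
      sub_ne_zero.mpr fun h => i.succ_ne_self (hy ⟨by omega, by omega⟩ ⟨hqi, hip.le⟩ h)
    rw [ksGapInv, if_pos ⟨by omega, by omega⟩, mul_one_div_cancel hne]
  have hpoint : ∀ i ∈ s, (y i - m) * ksRHS N χ y i
      = (y i - m) * (ksGapInv N y (i - 1) - ksGapInv N y i)
        + 2 * χ * hN N * (∑ j ∈ s.erase i, (y i - m) / (y j - y i)
          + ∑ j ∈ Icc 1 N \ s, (y i - m) * (1 / (y j - y i))) := by
    intro i hi
    rw [ksRHS_eq_ksGapInv hs χ y hi]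
    simp only [div_eq_mul_one_div (y i - m), ← mul_sum]
    ring
  rw [sum_congr rfl hpoint, sum_add_distrib, ← mul_sum, sum_add_distrib,
    sum_Icc_sub_mul_sub_eq m hqp hgap, sum_sum_erase_sub_div_sub (by simpa [s] using hy), hcard,
    hN]
  field_simp
  ring

lemma abs_one_div_sub_le_sqrt_extPot {N : ℕ} {s : Finset ℕ} {y : ℕ → ℝ} {i j : ℕ} (hi : i ∈ s)
    (hj : j ∈ Icc 1 N \ s) : |1 / (y j - y i)| ≤ √(extPot N s 2 y) := by
  refine Real.abs_le_sqrt ?_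
  rw [one_div_pow]
  calc 1 / (y j - y i) ^ 2 ≤ ∑ i' ∈ s, 1 / (y j - y i') ^ 2 :=
        single_le_sum (f := fun i' => 1 / (y j - y i') ^ 2) (fun _ _ => by positivity) hi
    _ ≤ extPot N s 2 y :=
        single_le_sum (f := fun j' => ∑ i' ∈ s, 1 / (y j' - y i') ^ 2)
          (fun _ _ => sum_nonneg fun _ _ => by positivity) hj

lemma abs_sub_meanOn_mul_le {N : ℕ} {s : Finset ℕ} {y : ℕ → ℝ} {i : ℕ} {w : ℝ} (hi : i ∈ s)
    (hw : |w| ≤ √(extPot N s 2 y)) :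
    |(y i - meanOn s y) * w| ≤ √(var2 s y * extPot N s 2 y) := by
  rw [abs_mul, Real.sqrt_mul (var2_nonneg s y)]
  exact mul_le_mul (abs_sub_meanOn_le_sqrt_var2 s hi) hw (abs_nonneg _) (Real.sqrt_nonneg _)

lemma abs_sum_sum_sub_meanOn_mul_le {N : ℕ} (s : Finset ℕ) (hs : s ⊆ Icc 1 N) (y : ℕ → ℝ) :
    |∑ i ∈ s, ∑ j ∈ Icc 1 N \ s, (y i - meanOn s y) * (1 / (y j - y i))|
      ≤ √N * √(var2 s y * extPot N s 2 y) := by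
  have hext : ∑ i ∈ s, ∑ j ∈ Icc 1 N \ s, (1 / (y j - y i)) ^ 2 = extPot N s 2 y := by
    rw [sum_comm, extPot]; simp only [one_div_pow]
  have hcard : (#(Icc 1 N \ s) : ℝ) ≤ N := by
    rw [card_sdiff_of_subset hs, Nat.card_Icc]; exact_mod_cast (by omega)
  calc _ ≤ √(#(Icc 1 N \ s) * (var2 s y * extPot N s 2 y)) := by
        rw [← hext]; exact abs_sum_sum_mul_le_sqrt _ _ _ _
    _ ≤ √N * √(var2 s y * extPot N s 2 y) := by
        rw [Real.sqrt_mul (by positivity)]; gcongr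

lemma abs_sum_sub_meanOn_mul_ksRHS_sub_le {N q p : ℕ} {χ : ℝ} (hχ : 0 ≤ χ) (hq : 1 ≤ q)
    (hqp : q ≤ p) (hpN : p ≤ N) {y : ℕ → ℝ} (hy : Set.InjOn y (Set.Icc q p)) :
    |∑ i ∈ Icc q p, (y i - meanOn (Icc q p) y) * ksRHS N χ y i
        - (p - q) * (1 - χ * (p - q + 1) / (N + 1))|
      ≤ (2 + 2 * χ / √N) * √(var2 (Icc q p) y * extPot N (Icc q p) 2 y) := by
  set s := Icc q p
  set Q := √(var2 s y * extPot N s 2 y)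
  have hs : s ⊆ Icc 1 N := Icc_subset_Icc hq hpN
  have hNpos : (0 : ℝ) < N := by exact_mod_cast (by omega : 0 < N)
  have hright : |(y p - meanOn s y) * ksGapInv N y p| ≤ Q := by
    refine abs_sub_meanOn_mul_le (right_mem_Icc.mpr hqp) ?_
    unfold ksGapInv; split_ifs with h
    · exact abs_one_div_sub_le_sqrt_extPot (right_mem_Icc.mpr hqp) (by simp [s]; omega)
    · simp
  have hleft : |(y q - meanOn s y) * ksGapInv N y (q - 1)| ≤ Q := by
    refine abs_sub_meanOn_mul_le (left_mem_Icc.mpr hqp) ?_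
    unfold ksGapInv; split_ifs with h
    · rw [Nat.sub_add_cancel hq, abs_div, abs_sub_comm, ← abs_div]
      exact abs_one_div_sub_le_sqrt_extPot (left_mem_Icc.mpr hqp) (by simp [s]; omega)
    · simp
  have hcoef : 2 * χ * hN N * √N ≤ 2 * χ / √N := by
    have h : hN N * N ≤ 1 := by
      rw [hN, one_div_mul_eq_div, div_le_one (by positivity)]; linarith
    rw [le_div_iff₀ (by positivity), mul_assoc, Real.mul_self_sqrt hNpos.le]
    linarith [mul_le_mul_of_nonneg_left h (by positivity : (0 : ℝ) ≤ 2 * χ)]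
  have hk : 0 ≤ 2 * χ * hN N := by rw [hN]; positivity
  have hext := abs_sum_sum_sub_meanOn_mul_le s hs y
  rw [sum_sub_meanOn_mul_ksRHS χ hq hqp hpN hy]
  set E := ∑ i ∈ s, ∑ j ∈ Icc 1 N \ s, (y i - meanOn s y) * (1 / (y j - y i))
  calc _ = |(y q - meanOn s y) * ksGapInv N y (q - 1) + -((y p - meanOn s y) * ksGapInv N y p)
        + 2 * χ * hN N * E| := by congr 1; ring
    _ ≤ Q + Q + 2 * χ * hN N * (√N * Q) := by
        refine (abs_add_three _ _ _).trans ?_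
        rw [abs_neg, abs_mul _ E, abs_of_nonneg hk]
        gcongr
    _ ≤ (2 + 2 * χ / √N) * Q := by
        nlinarith [mul_le_mul_of_nonneg_right hcoef (Real.sqrt_nonneg _ : 0 ≤ Q)]

lemma ksAlpha_pos {N k : ℕ} {χ : ℝ} (hk : 2 ≤ k) (hχ : ((N : ℝ) + 1) / k < χ) :
    0 < ((k : ℝ) - 1) * (χ * k / ((N : ℝ) + 1) - 1) := by
  have hk1 : (1 : ℝ) < k := by exact_mod_cast hk
  have h : N + 1 < χ * k := (div_lt_iff₀ (by positivity)).mp hχ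
  exact mul_pos (by linarith) (by rw [sub_pos, one_lt_div (by positivity)]; linarith)

lemma ksAlphaQP_pos {N k q p : ℕ} {χ : ℝ} (hχ : 0 ≤ χ) (hχk : χ < ((N : ℝ) + 1) / ((k : ℝ) - 1))
    (hqp : q < p) (hpqk : p - q + 1 ≤ k - 1) :
    0 < ((p : ℝ) - q) * (1 - χ * ((p : ℝ) - q + 1) / ((N : ℝ) + 1)) := by
  have hpq : ((p + 2 : ℕ) : ℝ) ≤ (k + q : ℕ) := by exact_mod_cast (by omega : p + 2 ≤ k + q)
  push_cast at hpq
  have hqp' : (q : ℝ) < p := by exact_mod_cast hqp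
  have hχk' := (lt_div_iff₀ (by linarith : (0 : ℝ) < k - 1)).mp hχk
  refine mul_pos (by linarith) ?_
  rw [sub_pos, div_lt_one (by positivity)]
  nlinarith

theorem stmt9_general (N k : ℕ) (hk : 2 ≤ k)
    (χ T : ℝ) (hχ1 : ((N : ℝ) + 1) / k < χ) (hχ2 : χ < ((N : ℝ) + 1) / ((k : ℝ) - 1))
    (hT : 0 < T)
    (X : ℕ → ℝ → ℝ) (hX : IsKSSol N χ T X)
    (l : ℕ) (hl : 1 ≤ l) (hlk : l + k - 1 ≤ N)
    (α : ℝ) (hα : α = ((k : ℝ) - 1) * (χ * k / ((N : ℝ) + 1) - 1))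
    (Xbar : ℝ)
    (Y : ℕ → ℝ → ℝ)
    (hY : ∀ i τ, Y i τ =
      (X i (T * (1 - Real.exp (-2 * α * τ))) - Xbar) /
        (Real.sqrt (2 * α * T) * Real.exp (-α * τ)))
    (q p : ℕ) (hq : q ∈ Finset.Icc l (l + k - 1)) (hp : p ∈ Finset.Icc l (l + k - 1))
    (hqp : q < p) (τ : ℝ) (hτ : 0 ≤ τ) :
    ((p - q + 1 ≤ k - 1) →
      Real.sqrt (var2 (Finset.Icc q p) (fun i => Y i τ)
          * extPot N (Finset.Icc q p) 2 (fun i => Y i τ))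
        ≤ (((p : ℝ) - q) * (1 - χ * ((p : ℝ) - q + 1) / ((N : ℝ) + 1)))
            / (2 * (2 + 2 * χ / Real.sqrt N)) →
      (0 < ((p : ℝ) - q) * (1 - χ * ((p : ℝ) - q + 1) / ((N : ℝ) + 1)) / 2
          + α * var2 (Finset.Icc q p) (fun i => Y i τ) ∧
        ((p : ℝ) - q) * (1 - χ * ((p : ℝ) - q + 1) / ((N : ℝ) + 1)) / 2
            + α * var2 (Finset.Icc q p) (fun i => Y i τ)
          ≤ (1 / 2) * deriv (fun σ => var2 (Finset.Icc q p) (fun i => Y i σ)) τ)) ∧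
    ((k ≤ p - q + 1) →
      Real.sqrt (var2 (Finset.Icc q p) (fun i => Y i τ)
          * extPot N (Finset.Icc q p) 2 (fun i => Y i τ))
        ≤ -(((p : ℝ) - q) * (1 - χ * ((p : ℝ) - q + 1) / ((N : ℝ) + 1)))
            / (2 * (2 + 2 * χ / Real.sqrt N)) →
      (1 / 2) * deriv (fun σ => var2 (Finset.Icc q p) (fun i => Y i σ)) τ
        ≤ ((p : ℝ) - q) * (1 - χ * ((p : ℝ) - q + 1) / ((N : ℝ) + 1)) / 2
          + α * var2 (Finset.Icc q p) (fun i => Y i τ)) := by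
  obtain rfl : Y = ksRescale X T α Xbar := funext fun i => funext (hY i)
  obtain ⟨hlq, -⟩ := Finset.mem_Icc.mp hq
  obtain ⟨-, hpk⟩ := Finset.mem_Icc.mp hp
  have hχ0 : 0 < χ := lt_trans (by positivity) hχ1
  have hα0 : 0 < α := hα ▸ ksAlpha_pos hk hχ1
  have hs : Icc q p ⊆ Icc 1 N := Icc_subset_Icc (by omega) (by omega)
  have hinj : Set.InjOn (fun i => ksRescale X T α Xbar i τ) (Set.Icc q p) :=
    (hX.strictMonoOn_ksRescale hα0 hT hτ Xbar).injOn.mono (Set.Icc_subset_Icc (by omega) (by omega))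
  obtain ⟨hlow, hupp⟩ := abs_le.mp
    (abs_sum_sub_meanOn_mul_ksRHS_sub_le (N := N) hχ0.le (by omega) hqp.le (by omega) hinj)
  rw [half_deriv_var2_eq (Icc q p) fun i hi => hX.hasDerivAt_ksRescale hα0 hT hτ Xbar (hs hi)]
  have hvar := var2_nonneg (Icc q p) (fun i => ksRescale X T α Xbar i τ)
  refine ⟨fun hsmall hQ => ?_, fun _ hQ => ?_⟩
  · have hA := ksAlphaQP_pos (N := N) hχ0.le hχ2 hqp hsmall
    rw [le_div_iff₀ (by positivity)] at hQ
    exact ⟨by positivity, by linarith⟩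
  · rw [le_div_iff₀ (by positivity)] at hQ
    linarith

/-- in the rescaled setting, with `α_{q,p} = (p-q)(1 - χ(p-q+1)/(N+1))`:
(1) if `p-q+1 ≤ k-1` and `√(P²_{q,p} 𝓗_{q,p,2}) ≤ α_{q,p}/(2(2+2χ/√N))` then
`(1/2) d/dτ P²_{q,p} ≥ α_{q,p}/2 + α P²_{q,p} > 0`;
(2) if `p-q+1 ≥ k` and `√(P²_{q,p} 𝓗_{q,p,2}) ≤ -α_{q,p}/(2(2+2χ/√N))` then
`(1/2) d/dτ P²_{q,p} ≤ α_{q,p}/2 + α P²_{q,p}`. -/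
theorem stmt9 (N k : ℕ) (hN2 : 2 ≤ N) (hk : 2 ≤ k) (hkN : k ≤ N)
    (χ T : ℝ) (hχ1 : ((N : ℝ) + 1) / k < χ) (hχ2 : χ < ((N : ℝ) + 1) / ((k : ℝ) - 1))
    (hT : 0 < T)
    (X : ℕ → ℝ → ℝ) (hX : IsKSSol N χ T X)
    (l : ℕ) (hl : 1 ≤ l) (hlk : l + k - 1 ≤ N)
    (hI : IsWeakBlowup N X T (Finset.Icc l (l + k - 1)))
    (α : ℝ) (hα : α = ((k : ℝ) - 1) * (χ * k / ((N : ℝ) + 1) - 1))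
    (Xbar : ℝ)
    (hXbar : Filter.Tendsto (fun t => (∑ i ∈ Finset.Icc l (l + k - 1), X i t) / (k : ℝ))
      (nhdsWithin T (Set.Iio T)) (nhds Xbar))
    (Y : ℕ → ℝ → ℝ)
    (hY : ∀ i τ, Y i τ =
      (X i (T * (1 - Real.exp (-2 * α * τ))) - Xbar) /
        (Real.sqrt (2 * α * T) * Real.exp (-α * τ)))
    (q p : ℕ) (hq : q ∈ Finset.Icc l (l + k - 1)) (hp : p ∈ Finset.Icc l (l + k - 1))
    (hqp : q < p) (τ : ℝ) (hτ : 0 ≤ τ) :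
    ((p - q + 1 ≤ k - 1) →
      Real.sqrt (var2 (Finset.Icc q p) (fun i => Y i τ)
          * extPot N (Finset.Icc q p) 2 (fun i => Y i τ))
        ≤ (((p : ℝ) - q) * (1 - χ * ((p : ℝ) - q + 1) / ((N : ℝ) + 1)))
            / (2 * (2 + 2 * χ / Real.sqrt N)) →
      (0 < ((p : ℝ) - q) * (1 - χ * ((p : ℝ) - q + 1) / ((N : ℝ) + 1)) / 2
          + α * var2 (Finset.Icc q p) (fun i => Y i τ) ∧
        ((p : ℝ) - q) * (1 - χ * ((p : ℝ) - q + 1) / ((N : ℝ) + 1)) / 2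
            + α * var2 (Finset.Icc q p) (fun i => Y i τ)
          ≤ (1 / 2) * deriv (fun σ => var2 (Finset.Icc q p) (fun i => Y i σ)) τ)) ∧
    ((k ≤ p - q + 1) →
      Real.sqrt (var2 (Finset.Icc q p) (fun i => Y i τ)
          * extPot N (Finset.Icc q p) 2 (fun i => Y i τ))
        ≤ -(((p : ℝ) - q) * (1 - χ * ((p : ℝ) - q + 1) / ((N : ℝ) + 1)))
            / (2 * (2 + 2 * χ / Real.sqrt N)) →
      (1 / 2) * deriv (fun σ => var2 (Finset.Icc q p) (fun i => Y i σ)) τ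
        ≤ ((p : ℝ) - q) * (1 - χ * ((p : ℝ) - q + 1) / ((N : ℝ) + 1)) / 2
          + α * var2 (Finset.Icc q p) (fun i => Y i τ)) :=
  stmt9_general N k hk χ T hχ1 hχ2 hT X hX l hl hlk α hα Xbar Y hY q p hq hp hqp τ hτ
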